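/- Amenability of the indefinite integral: if K is a compact line, G : K → ℝ is amenable, and f : K → ℝ is G-integrable, then F(x) := ∫_{0_K}^x f dG is a well-defined amenable function, and for every c ∈ K one has F(c) − L_F(c) = f(c)(G(c) − L_G(c)). In particular, F is continuous at every point where G is continuous. -/

import Mathlib

open Set Filter MeasureTheory

/-- A tagged partition of the interval `[a,b]` in a linear order `K`. -/
structure TaggedPartition (K : Type*) [LinearOrder K] (a b : K) where
  n : ℕ
  x : ℕ → K
  t : ℕ → K
  x_zero : x 0 = a
  x_last : x n = b
  mono : ∀ i < n, x i ≤ x (i + 1)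
  tag_mem : ∀ i < n, t (i + 1) ∈ Set.Icc (x i) (x (i + 1))

/-- A gauge on the interval `[a,b]` of `K`: each point of `[a,b]` is assigned a
relatively open subinterval of `[a,b]` containing it. -/
def IsGauge (K : Type*) [LinearOrder K] [TopologicalSpace K] (a b : K) (δ : K → Set K) : Prop :=
  ∀ x ∈ Set.Icc a b, x ∈ δ x ∧ (δ x).OrdConnected ∧ ∃ U, IsOpen U ∧ δ x = U ∩ Set.Icc a b

/-- A tagged partition is `δ`-fine when `(x_{i-1}, x_i] ⊆ δ(t_i)` for all `i`. -/
def TaggedPartition.IsFine {K : Type*} [LinearOrder K] {a b : K}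
    (P : TaggedPartition K a b) (δ : K → Set K) : Prop :=
  ∀ i < P.n, Set.Ioc (P.x i) (P.x (i + 1)) ⊆ δ (P.t (i + 1))

/-- The Riemann sum `S(f,G,P) = f(a)G(a) + Σ f(t_i)(G(x_i) - G(x_{i-1}))`. -/
noncomputable def riemannSum {K : Type*} [LinearOrder K] {a b : K}
    (f G : K → ℝ) (P : TaggedPartition K a b) : ℝ :=
  f a * G a + ∑ i ∈ Finset.range P.n, f (P.t (i + 1)) * (G (P.x (i + 1)) - G (P.x i))

/-- `f` has Kurzweil–Stieltjes integral `A` with respect to `G` over `[a,b]`. -/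
def HasIntegral {K : Type*} [LinearOrder K] [TopologicalSpace K]
    (f G : K → ℝ) (a b : K) (A : ℝ) : Prop :=
  ∀ ε : ℝ, 0 < ε → ∃ δ : K → Set K, IsGauge K a b δ ∧
    ∀ P : TaggedPartition K a b, P.IsFine δ → |riemannSum f G P - A| < ε

/-- `G` is amenable: right-continuous everywhere, and regulated (left limits exist at
left-dense points, right limits at right-dense points). -/
def Amenable {K : Type*} [LinearOrder K] [TopologicalSpace K] [BoundedOrder K]
    (G : K → ℝ) : Prop :=
  (∀ x : K, ContinuousWithinAt G (Set.Ici x) x) ∧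
  (∀ x : K, x ≠ ⊥ → (¬ ∃ y, y ⋖ x) → ∃ l, Filter.Tendsto G (nhdsWithin x (Set.Iio x)) (nhds l)) ∧
  (∀ x : K, x ≠ ⊤ → (¬ ∃ y, x ⋖ y) → ∃ l, Filter.Tendsto G (nhdsWithin x (Set.Ioi x)) (nhds l))

open Classical in
/-- `L_G(x)`: `0` at the least element, `G` of the immediate predecessor if `x` is
left-isolated, and the left limit of `G` at `x` if `x` is left-dense. -/
noncomputable def Lfun {K : Type*} [LinearOrder K] [TopologicalSpace K] [BoundedOrder K]
    (G : K → ℝ) (x : K) : ℝ :=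
  if x = ⊥ then 0
  else if h : ∃ y, y ⋖ x then G h.choose
  else Function.leftLim G x

/-- The set of variation sums of `G` over divisions of `[a,b]`. -/
def varSums {K : Type*} [LinearOrder K] (G : K → ℝ) (a b : K) : Set ℝ :=
  {v | ∃ (n : ℕ) (x : ℕ → K), x 0 = a ∧ x n = b ∧ (∀ i < n, x i ≤ x (i + 1)) ∧
        v = ∑ i ∈ Finset.range n, |G (x (i + 1)) - G (x i)|}

/-- `S` is null for the outer measure induced by `μ` via covers by countably many
open intervals. -/
def GNull {K : Type*} [LinearOrder K] [TopologicalSpace K] [MeasurableSpace K]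
    (μ : MeasureTheory.Measure K) (S : Set K) : Prop :=
  ∀ ε : ℝ, 0 < ε → ∃ I : ℕ → Set K, (∀ n, IsOpen (I n) ∧ (I n).OrdConnected) ∧
    S ⊆ ⋃ n, I n ∧ ∑' n, μ (I n) < ENNReal.ofReal ε

/-! Splitting fine partitions shows that `F v - F u` is the integral of `f dG` over `(u, v]`; the
sums over `[a, b]` differ from those over `(a, b]` only by the atom `f a * G a`. A single cell
`(u, v]` around `c` tagged at `c` and fine for the gauge of `ε` gives
`|F y - F c - f c * (G y - G c)| ≤ ε` near `c`, so every one-sided limit `L` of `G` at `c` turns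
into the limit `F c + f c * (L - G c)` of `F`. This gives amenability of `F`, continuity of `F`
where `G` is continuous, and the jump formula at left-dense points. At a point with an immediate
predecessor `p` the cell `(p, c] = {c}` is fine for every gauge, and at `⊥` the integral is the
atom `f ⊥ * G ⊥`. -/

open Topology TaggedPartition

namespace TaggedPartition

variable {K : Type*} [LinearOrder K] {a b c : K}

/-- `riemannSum` without the atom `f a * G a`: the sum for the half-open interval `(a, b]`. -/
noncomputable def riemannSumIoc (f G : K → ℝ) (P : TaggedPartition K a b) : ℝ :=
  ∑ i ∈ Finset.range P.n, f (P.t (i + 1)) * (G (P.x (i + 1)) - G (P.x i))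

theorem riemannSum_eq (f G : K → ℝ) (P : TaggedPartition K a b) :
    riemannSum f G P = f a * G a + riemannSumIoc f G P := rfl

def single (a b t : K) (hat : a ≤ t) (htb : t ≤ b) : TaggedPartition K a b where
  n := 1
  x i := if i = 0 then a else b
  t _ := t
  x_zero := rfl
  x_last := rfl
  mono _ hi := by simpa [Nat.lt_one_iff.1 hi] using hat.trans htb
  tag_mem _ hi := by simpa [Nat.lt_one_iff.1 hi] using ⟨hat, htb⟩

theorem riemannSumIoc_single (f G : K → ℝ) {t : K} (hat : a ≤ t) (htb : t ≤ b) :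
    riemannSumIoc f G (single a b t hat htb) = f t * (G b - G a) := by
  simp [riemannSumIoc, single]

theorem isFine_single {t : K} (hat : a ≤ t) (htb : t ≤ b) {δ : K → Set K}
    (h : Ioc a b ⊆ δ t) : (single a b t hat htb).IsFine δ := by
  intro i hi
  simpa [single, Nat.lt_one_iff.1 hi] using h

section Append

variable (P : TaggedPartition K a b) (Q : TaggedPartition K b c)

def appendX (i : ℕ) : K := if i ≤ P.n then P.x i else Q.x (i - P.n)

def appendT (i : ℕ) : K := if i ≤ P.n then P.t i else Q.t (i - P.n)

variable {P Q}

theorem appendX_of_le {i : ℕ} (h : i ≤ P.n) : appendX P Q i = P.x i := if_pos h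

theorem appendT_of_le {i : ℕ} (h : i ≤ P.n) : appendT P Q i = P.t i := if_pos h

theorem appendX_add (j : ℕ) : appendX P Q (P.n + j) = Q.x j := by
  rcases j with _ | j
  · simp [appendX, P.x_last, Q.x_zero]
  · simp [appendX]

theorem appendT_add_succ (j : ℕ) : appendT P Q (P.n + j + 1) = Q.t (j + 1) := by
  simp [appendT, add_assoc]

theorem forall_cell_append {Φ : K → K → K → Prop}
    (hP : ∀ i < P.n, Φ (P.x i) (P.x (i + 1)) (P.t (i + 1)))
    (hQ : ∀ j < Q.n, Φ (Q.x j) (Q.x (j + 1)) (Q.t (j + 1))) :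
    ∀ i < P.n + Q.n, Φ (appendX P Q i) (appendX P Q (i + 1)) (appendT P Q (i + 1)) := by
  intro i hi
  rcases lt_or_ge i P.n with h | h
  · rw [appendX_of_le h.le, appendX_of_le h, appendT_of_le h]
    exact hP i h
  · obtain ⟨j, rfl⟩ := Nat.exists_eq_add_of_le h
    rw [appendX_add, add_assoc, appendX_add, ← add_assoc, appendT_add_succ]
    exact hQ j (by omega)

variable (P Q)

def append : TaggedPartition K a c where
  n := P.n + Q.n
  x := appendX P Q
  t := appendT P Q
  x_zero := appendX_of_le (Nat.zero_le _) |>.trans P.x_zero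
  x_last := (appendX_add Q.n).trans Q.x_last
  mono := forall_cell_append (Φ := fun u v _ => u ≤ v) P.mono Q.mono
  tag_mem := forall_cell_append (Φ := fun u v t => t ∈ Icc u v) P.tag_mem Q.tag_mem

variable {P Q}

theorem riemannSumIoc_append (f G : K → ℝ) :
    riemannSumIoc f G (P.append Q) = riemannSumIoc f G P + riemannSumIoc f G Q := by
  simp only [riemannSumIoc, append, Finset.sum_range_add]
  congr 1
  · refine Finset.sum_congr rfl fun i hi => ?_
    have h := Finset.mem_range.1 hi
    rw [appendX_of_le h.le, appendX_of_le h, appendT_of_le h]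
  · refine Finset.sum_congr rfl fun j _ => ?_
    rw [appendT_add_succ, appendX_add, add_assoc, appendX_add]

theorem IsFine.append {δ : K → Set K} (hP : P.IsFine δ) (hQ : Q.IsFine δ) :
    (P.append Q).IsFine δ :=
  forall_cell_append (Φ := fun u v t => Ioc u v ⊆ δ t) hP hQ

end Append

theorem IsFine.mono {P : TaggedPartition K a b} {δ δ' : K → Set K} (hP : P.IsFine δ)
    (h : ∀ x, δ x ⊆ δ' x) : P.IsFine δ' :=
  fun i hi => (hP i hi).trans (h _)

end TaggedPartition

theorem isGauge_const_Icc {K : Type*} [LinearOrder K] [TopologicalSpace K] (a b : K) :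
    IsGauge K a b fun _ => Icc a b :=
  fun _ hx => ⟨hx, ordConnected_Icc, univ, isOpen_univ, (univ_inter _).symm⟩

namespace IsGauge

variable {K : Type*} [LinearOrder K] [TopologicalSpace K] {a b : K} {δ δ' : K → Set K}

theorem inter (h : IsGauge K a b δ) (h' : IsGauge K a b δ') :
    IsGauge K a b fun x => δ x ∩ δ' x := by
  intro x hx
  obtain ⟨hx₁, hc₁, U, hU, hU'⟩ := h x hx
  obtain ⟨hx₂, hc₂, V, hV, hV'⟩ := h' x hx
  refine ⟨⟨hx₁, hx₂⟩, hc₁.inter hc₂, U ∩ V, hU.inter hV, ?_⟩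
  change δ x ∩ δ' x = _
  rw [hU', hV', ← inter_inter_distrib_right]

theorem restrict {a' b' : K} (h : IsGauge K a b δ) (hsub : Icc a' b' ⊆ Icc a b) :
    IsGauge K a' b' fun x => δ x ∩ Icc a' b' := by
  intro x hx
  obtain ⟨hx', hc, U, hU, hU'⟩ := h x (hsub hx)
  refine ⟨⟨hx', hx⟩, hc.inter ordConnected_Icc, U, hU, ?_⟩
  change δ x ∩ _ = _
  rw [hU', inter_assoc, inter_eq_self_of_subset_right hsub]

theorem mem_self (h : IsGauge K a b δ) {x : K} (hx : x ∈ Icc a b) : x ∈ δ x := (h x hx).1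

theorem Icc_subset (h : IsGauge K a b δ) {x u v : K} (hx : x ∈ Icc a b) (hu : u ∈ δ x)
    (hv : v ∈ δ x) : Icc u v ⊆ δ x :=
  (h x hx).2.1.out hu hv

theorem mem_nhds [BoundedOrder K] (h : IsGauge K ⊥ ⊤ δ) (x : K) : δ x ∈ 𝓝 x := by
  obtain ⟨hx, -, U, hU, hU'⟩ := h x ⟨bot_le, le_top⟩
  rw [Icc_bot_top, inter_univ] at hU'
  exact hU' ▸ hU.mem_nhds (hU' ▸ hx)

variable [OrderTopology K] [CompactSpace K]

/-- Either `δ m` reaches beyond `m`, or `m` has an immediate successor in `(m, b]`. -/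
theorem exists_fine_cell_right (h : IsGauge K a b δ) {m : K} (hm : m ∈ Icc a b)
    (hmb : m < b) : ∃ z ∈ Ioc m b, ∃ t ∈ Icc m z, Ioc m z ⊆ δ t := by
  by_cases hreach : ∃ z ∈ Ioc m b, z ∈ δ m
  · obtain ⟨z, hz, hzδ⟩ := hreach
    exact ⟨z, hz, m, ⟨le_rfl, hz.1.le⟩,
      Ioc_subset_Icc_self.trans (h.Icc_subset hm (h.mem_self hm) hzδ)⟩
  push Not at hreach
  obtain ⟨-, -, U, hU, hU'⟩ := h m hm
  have hIoc : Ioc m b ⊆ Icc a b := Ioc_subset_Icc_self.trans (Icc_subset_Icc_left hm.1)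
  have hclosed : IsClosed (Ioc m b) := by
    refine closure_subset_iff_isClosed.1 fun y hy => ?_
    have hy' : y ∈ Icc m b := closure_minimal Ioc_subset_Icc_self isClosed_Icc hy
    rcases hy'.1.eq_or_lt with rfl | hmy
    · obtain ⟨z, hzU, hz⟩ := mem_closure_iff.1 hy U hU (hU' ▸ h.mem_self hm).1
      exact absurd (hU' ▸ ⟨hzU, hIoc hz⟩) (hreach z hz)
    · exact ⟨hmy, hy'.2⟩
  obtain ⟨l, hl, hleast⟩ := hclosed.isCompact.exists_isLeast ⟨b, hmb, le_rfl⟩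
  refine ⟨l, hl, l, ⟨hl.1.le, le_rfl⟩, fun z hz => ?_⟩
  obtain rfl : z = l := hz.2.antisymm (hleast ⟨hz.1, hz.2.trans hl.2⟩)
  exact h.mem_self (hIoc hl)

/-- Cousin's lemma. -/
theorem exists_isFine (hab : a ≤ b) (hδ : IsGauge K a b δ) :
    ∃ P : TaggedPartition K a b, P.IsFine δ := by
  set S : Set K := {y ∈ Icc a b | ∃ P : TaggedPartition K a y, P.IsFine δ}
  have extend : ∀ y ∈ S, ∀ z t, z ≤ b → ∀ (hyt : y ≤ t) (htz : t ≤ z), Ioc y z ⊆ δ t → z ∈ S :=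
    fun y ⟨hy, P, hP⟩ z t hzb hyt htz hcell =>
      ⟨⟨hy.1.trans (hyt.trans htz), hzb⟩, P.append (single y z t hyt htz),
        hP.append (isFine_single hyt htz hcell)⟩
  obtain ⟨m, hmS, hmax⟩ : ∃ m, IsGreatest (closure S) m :=
    isClosed_closure.isCompact.exists_isGreatest ⟨a, subset_closure ⟨⟨le_rfl, hab⟩,
      single a a a le_rfl le_rfl, isFine_single le_rfl le_rfl (by simp)⟩⟩
  have hm : m ∈ Icc a b := closure_minimal (sep_subset _ _) isClosed_Icc hmS
  have hmS : m ∈ S := by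
    obtain ⟨hmδ, -, U, hU, hU'⟩ := hδ m hm
    obtain ⟨y, hyU, hyS⟩ := mem_closure_iff.1 hmS U hU (hU' ▸ hmδ).1
    have hyδ : y ∈ δ m := hU' ▸ ⟨hyU, hyS.1⟩
    exact extend y hyS m m hm.2 (hmax (subset_closure hyS)) le_rfl
      (Ioc_subset_Icc_self.trans (hδ.Icc_subset hm hyδ hmδ))
  rcases hm.2.eq_or_lt with rfl | hmb
  · exact hmS.2
  · obtain ⟨z, hz, t, ht, hcell⟩ := hδ.exists_fine_cell_right hm hmb
    exact absurd (hmax (subset_closure (extend m hmS z t hz.2 ht.1 ht.2 hcell))) hz.1.not_ge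

end IsGauge

section Integral

variable {K : Type*} [LinearOrder K] [TopologicalSpace K] {f G : K → ℝ} {a b c : K}

def HasIntegralIoc (f G : K → ℝ) (a b : K) (J : ℝ) : Prop :=
  ∀ ε : ℝ, 0 < ε → ∃ δ : K → Set K, IsGauge K a b δ ∧
    ∀ P : TaggedPartition K a b, P.IsFine δ → |riemannSumIoc f G P - J| < ε

theorem hasIntegral_iff_hasIntegralIoc {A : ℝ} :
    HasIntegral f G a b A ↔ HasIntegralIoc f G a b (A - f a * G a) := by
  have h (P : TaggedPartition K a b) :
      riemannSum f G P - A = riemannSumIoc f G P - (A - f a * G a) := by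
    rw [riemannSum_eq]; ring
  simp only [HasIntegral, HasIntegralIoc, h]

def fineFilter (a b : K) :
    Filter (TaggedPartition K a b) :=
  ⨅ (δ) (_ : IsGauge K a b δ), 𝓟 {P | P.IsFine δ}

theorem hasBasis_fineFilter :
    (fineFilter a b).HasBasis (IsGauge K a b) fun δ => {P | P.IsFine δ} :=
  hasBasis_biInf_principal'
    (fun _ h _ h' => ⟨_, h.inter h', fun _ (hP : IsFine _ _) => hP.mono fun _ => inter_subset_left,
      fun _ (hP : IsFine _ _) => hP.mono fun _ => inter_subset_right⟩)
    ⟨_, isGauge_const_Icc a b⟩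

theorem hasIntegralIoc_iff_tendsto {J : ℝ} :
    HasIntegralIoc f G a b J ↔ Tendsto (riemannSumIoc f G) (fineFilter a b) (𝓝 J) := by
  simp only [hasBasis_fineFilter.tendsto_iff Metric.nhds_basis_ball, mem_ofPred_eq,
    Metric.mem_ball, Real.dist_eq, HasIntegralIoc]

theorem HasIntegralIoc.eq_riemannSumIoc {J : ℝ} (h : HasIntegralIoc f G a b J)
    {P : TaggedPartition K a b} (hP : ∀ δ, IsGauge K a b δ → P.IsFine δ) :
    J = riemannSumIoc f G P :=
  eq_of_forall_dist_le fun ε hε => by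
    obtain ⟨δ, hδ, hJ⟩ := h ε hε
    rw [Real.dist_eq, abs_sub_comm]
    exact (hJ P (hP δ hδ)).le

theorem HasIntegralIoc.eq_of_Ioc_subset_singleton {J : ℝ} (h : HasIntegralIoc f G a b J)
    {t : K} (hat : a ≤ t) (htb : t ≤ b) (hsub : Ioc a b ⊆ {t}) : J = f t * (G b - G a) := by
  rw [h.eq_riemannSumIoc fun δ hδ => isFine_single hat htb ?_, riemannSumIoc_single]
  exact hsub.trans (singleton_subset_iff.2 (hδ.mem_self ⟨hat, htb⟩))

theorem HasIntegral.eq_mul_of_same {A : ℝ} (h : HasIntegral f G a a A) : A = f a * G a := by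
  have := (hasIntegral_iff_hasIntegralIoc.1 h).eq_of_Ioc_subset_singleton le_rfl le_rfl (by simp)
  linarith

variable [OrderTopology K] [CompactSpace K]

theorem neBot_fineFilter (hab : a ≤ b) : (fineFilter a b).NeBot :=
  hasBasis_fineFilter.neBot_iff.2 fun hδ => hδ.exists_isFine hab

theorem exists_hasIntegralIoc_of_cauchy (hab : a ≤ b)
    (h : ∀ ε : ℝ, 0 < ε → ∃ δ : K → Set K, IsGauge K a b δ ∧ ∀ P Q : TaggedPartition K a b,
      P.IsFine δ → Q.IsFine δ → |riemannSumIoc f G P - riemannSumIoc f G Q| < ε) :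
    ∃ J, HasIntegralIoc f G a b J := by
  have := neBot_fineFilter hab
  simp only [hasIntegralIoc_iff_tendsto]
  refine cauchy_map_iff_exists_tendsto.1 (Metric.cauchy_iff.2 ⟨inferInstance, fun ε hε => ?_⟩)
  obtain ⟨δ, hδ, hS⟩ := h ε hε
  refine ⟨_, image_mem_map (hasBasis_fineFilter.mem_of_mem hδ), ?_⟩
  rintro _ ⟨P, hP, rfl⟩ _ ⟨Q, hQ, rfl⟩
  exact hS P Q hP hQ

/-- Two fine partitions of `[a, c]` are compared by completing both with the same fine partition
of `[c, b]`. -/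
theorem HasIntegralIoc.exists_of_le {J : ℝ} (h : HasIntegralIoc f G a b J) (hac : a ≤ c)
    (hcb : c ≤ b) : ∃ I, HasIntegralIoc f G a c I := by
  refine exists_hasIntegralIoc_of_cauchy hac fun ε hε => ?_
  obtain ⟨δ, hδ, hJ⟩ := h (ε / 2) (by positivity)
  obtain ⟨R, hR⟩ := (hδ.restrict (Icc_subset_Icc hac le_rfl)).exists_isFine hcb
  refine ⟨_, hδ.restrict (Icc_subset_Icc le_rfl hcb), fun P Q hP hQ => ?_⟩
  have hR' := hR.mono fun _ => inter_subset_left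
  have hP' := hJ _ ((hP.mono fun _ => inter_subset_left).append hR')
  have hQ' := hJ _ ((hQ.mono fun _ => inter_subset_left).append hR')
  rw [riemannSumIoc_append] at hP' hQ'
  rw [abs_lt] at hP' hQ' ⊢
  constructor <;> linarith

theorem HasIntegral.exists_of_le {A : ℝ} (h : HasIntegral f G a b A) (hac : a ≤ c)
    (hcb : c ≤ b) : ∃ B, HasIntegral f G a c B := by
  obtain ⟨I, hI⟩ := (hasIntegral_iff_hasIntegralIoc.1 h).exists_of_le hac hcb
  exact ⟨I + f a * G a, hasIntegral_iff_hasIntegralIoc.2 (by rwa [add_sub_cancel_right])⟩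

theorem HasIntegralIoc.sub_adjacent {J I : ℝ} (hb : HasIntegralIoc f G a b J)
    (hc : HasIntegralIoc f G a c I) (hac : a ≤ c) (hcb : c ≤ b) :
    HasIntegralIoc f G c b (J - I) := by
  intro ε hε
  obtain ⟨δ₁, hδ₁, hI⟩ := hc (ε / 2) (by positivity)
  obtain ⟨δ₂, hδ₂, hJ⟩ := hb (ε / 2) (by positivity)
  obtain ⟨Q, hQ⟩ := (hδ₁.inter (hδ₂.restrict (Icc_subset_Icc le_rfl hcb))).exists_isFine hac
  refine ⟨_, hδ₂.restrict (Icc_subset_Icc hac le_rfl), fun P hP => ?_⟩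
  have h₁ := hI Q (hQ.mono fun _ => inter_subset_left)
  have h₂ := hJ _ ((hQ.mono fun _ => inter_subset_right.trans inter_subset_left).append
    (hP.mono fun _ => inter_subset_left))
  rw [riemannSumIoc_append] at h₂
  rw [abs_lt] at h₁ h₂ ⊢
  constructor <;> linarith

theorem HasIntegral.hasIntegralIoc_sub {B C : ℝ} (hb : HasIntegral f G a b B)
    (hc : HasIntegral f G a c C) (hac : a ≤ c) (hcb : c ≤ b) :
    HasIntegralIoc f G c b (B - C) := by
  have := (hasIntegral_iff_hasIntegralIoc.1 hb).sub_adjacent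
    (hasIntegral_iff_hasIntegralIoc.1 hc) hac hcb
  rwa [sub_sub_sub_cancel_right] at this

end Integral

section LeftValue

variable {K : Type*} [LinearOrder K] [TopologicalSpace K] [BoundedOrder K]

theorem Lfun_of_covBy (G : K → ℝ) {p c : K} (h : p ⋖ c) : Lfun G c = G p := by
  have hex : ∃ y, y ⋖ c := ⟨p, h⟩
  rw [Lfun, if_neg (bot_le.trans_lt h.lt).ne', dif_pos hex, hex.choose_spec.unique_left h]

theorem Lfun_of_not_covBy (G : K → ℝ) {c : K} (hc : c ≠ ⊥) (h : ¬∃ y, y ⋖ c) :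
    Lfun G c = Function.leftLim G c := by
  rw [Lfun, if_neg hc, dif_neg h]

theorem nhdsLT_neBot_of_not_covBy [OrderTopology K] {c : K} (hc : c ≠ ⊥) (h : ¬∃ y, y ⋖ c) :
    (𝓝[<] c).NeBot :=
  mem_closure_iff_nhdsWithin_neBot.1 <|
    (Order.IsSuccPrelimit.isLUB_Iio (not_exists.1 h)).mem_closure ⟨⊥, bot_lt_iff_ne_bot.2 hc⟩

end LeftValue

section Indefinite

variable {K : Type*} [LinearOrder K] [TopologicalSpace K] [OrderTopology K] [CompactSpace K]
  {f G F : K → ℝ}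

def IsIndefiniteIntegral (f G F : K → ℝ) : Prop :=
  ∀ u v, u ≤ v → HasIntegralIoc f G u v (F v - F u)

/-- The cell is completed on both sides by partitions that are also fine for the integrals over
`(a, u]` and `(v, b]`. -/
theorem abs_sub_sub_mul_lt_of_isFine (hF : IsIndefiniteIntegral f G F) {a b : K}
    {δ : K → Set K} {ε : ℝ} (hε : 0 < ε) (hδ : IsGauge K a b δ)
    (hS : ∀ P : TaggedPartition K a b, P.IsFine δ → |riemannSumIoc f G P - (F b - F a)| < ε)
    {u t v : K} (hau : a ≤ u) (hut : u ≤ t) (htv : t ≤ v) (hvb : v ≤ b)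
    (hcell : Ioc u v ⊆ δ t) : |F v - F u - f t * (G v - G u)| < 3 * ε := by
  obtain ⟨δ₁, hδ₁, h₁⟩ := hF a u hau ε hε
  obtain ⟨δ₂, hδ₂, h₂⟩ := hF v b hvb ε hε
  obtain ⟨Q, hQ⟩ := (hδ₁.inter (hδ.restrict (Icc_subset_Icc le_rfl
    ((hut.trans htv).trans hvb)))).exists_isFine hau
  obtain ⟨R, hR⟩ := (hδ₂.inter (hδ.restrict (Icc_subset_Icc
    (hau.trans (hut.trans htv)) le_rfl))).exists_isFine hvb
  have hQR : ∀ x, δ₁ x ∩ (δ x ∩ Icc a u) ⊆ δ x ∧ δ₂ x ∩ (δ x ∩ Icc v b) ⊆ δ x :=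
    fun _ => ⟨inter_subset_right.trans inter_subset_left,
      inter_subset_right.trans inter_subset_left⟩
  have h := hS ((Q.append (single u v t hut htv)).append R)
    (((hQ.mono fun x => (hQR x).1).append (isFine_single hut htv hcell)).append
      (hR.mono fun x => (hQR x).2))
  rw [riemannSumIoc_append, riemannSumIoc_append, riemannSumIoc_single] at h
  have hQ' := h₁ Q (hQ.mono fun _ => inter_subset_left)
  have hR' := h₂ R (hR.mono fun _ => inter_subset_left)
  rw [abs_lt] at h hQ' hR' ⊢
  constructor <;> linarith

variable [BoundedOrder K]

theorem tendsto_sub_sub_mul_sub (hF : IsIndefiniteIntegral f G F) (c : K) :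
    Tendsto (fun y => F y - F c - f c * (G y - G c)) (𝓝 c) (𝓝 0) := by
  refine Metric.tendsto_nhds.2 fun ε hε => ?_
  obtain ⟨δ, hδ, hS⟩ := hF ⊥ ⊤ bot_le (ε / 3) (by positivity)
  have hc : c ∈ Icc ⊥ ⊤ := ⟨bot_le, le_top⟩
  have hcell {u v : K} (hu : u ∈ δ c) (hv : v ∈ δ c) : Ioc u v ⊆ δ c :=
    Ioc_subset_Icc_self.trans (hδ.Icc_subset hc hu hv)
  have hε3 : 3 * (ε / 3) = ε := by ring
  filter_upwards [hδ.mem_nhds c] with y hy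
  rw [Real.dist_0_eq_abs]
  rcases le_total c y with hcy | hyc
  · simpa [hε3] using abs_sub_sub_mul_lt_of_isFine hF (by positivity) hδ hS bot_le le_rfl hcy
      le_top (hcell (hδ.mem_self hc) hy)
  · have := abs_sub_sub_mul_lt_of_isFine hF (by positivity) hδ hS bot_le hyc le_rfl le_top
      (hcell hy (hδ.mem_self hc))
    rw [← abs_neg, hε3] at this
    convert this using 2
    ring

theorem tendsto_add_mul_sub_of_tendsto (hF : IsIndefiniteIntegral f G F) {c : K}
    {l : Filter K} (hl : l ≤ 𝓝 c) {L : ℝ} (hG : Tendsto G l (𝓝 L)) :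
    Tendsto F l (𝓝 (F c + f c * (L - G c))) := by
  have := ((tendsto_sub_sub_mul_sub hF c).mono_left hl).add
    ((tendsto_const_nhds (x := F c)).add ((tendsto_const_nhds (x := f c)).mul (hG.sub_const (G c))))
  rw [zero_add] at this
  exact this.congr fun y => by ring

theorem sub_Lfun_eq_mul_sub_Lfun (hF₀ : F ⊥ = f ⊥ * G ⊥) (hF : IsIndefiniteIntegral f G F)
    (hG : ∀ c : K, c ≠ ⊥ → (¬∃ y, y ⋖ c) → ∃ l, Tendsto G (𝓝[<] c) (𝓝 l)) (c : K) :
    F c - Lfun F c = f c * (G c - Lfun G c) := by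
  by_cases hc : c = ⊥
  · simp [Lfun, hc, hF₀]
  by_cases hcov : ∃ p, p ⋖ c
  · obtain ⟨p, hp⟩ := hcov
    rw [Lfun_of_covBy F hp, Lfun_of_covBy G hp]
    exact (hF p c hp.le).eq_of_Ioc_subset_singleton hp.le le_rfl hp.Ioc_eq.subset
  · obtain ⟨l, hl⟩ := hG c hc hcov
    have := nhdsLT_neBot_of_not_covBy hc hcov
    rw [Lfun_of_not_covBy F hc hcov, Lfun_of_not_covBy G hc hcov, leftLim_eq_of_tendsto hl,
      leftLim_eq_of_tendsto (tendsto_add_mul_sub_of_tendsto hF nhdsWithin_le_nhds hl)]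
    ring

end Indefinite

theorem indefinite_integral_amenable {K : Type*} [LinearOrder K] [TopologicalSpace K]
    [OrderTopology K] [CompactSpace K] [BoundedOrder K] (f G : K → ℝ) (hG : Amenable G)
    (A : ℝ) (hf : HasIntegral f G (⊥ : K) ⊤ A) :
    (∀ x : K, ∃ B, HasIntegral f G (⊥ : K) x B) ∧
    ∀ F : K → ℝ, (∀ x : K, HasIntegral f G (⊥ : K) x (F x)) →
      Amenable F ∧ (∀ c : K, F c - Lfun F c = f c * (G c - Lfun G c)) ∧
      (∀ c : K, ContinuousAt G c → ContinuousAt F c) := by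
  refine ⟨fun x => hf.exists_of_le bot_le le_top, fun F hF => ?_⟩
  have hinc : IsIndefiniteIntegral f G F :=
    fun u v huv => (hF v).hasIntegralIoc_sub (hF u) bot_le huv
  have hlim {c : K} {l : Filter K} (hl : l ≤ 𝓝 c) {L : ℝ} (hGl : Tendsto G l (𝓝 L)) :
      Tendsto F l (𝓝 (F c + f c * (L - G c))) :=
    tendsto_add_mul_sub_of_tendsto hinc hl hGl
  have hright (c : K) : ContinuousWithinAt F (Ici c) c := by
    simpa [ContinuousWithinAt] using hlim nhdsWithin_le_nhds (hG.1 c)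
  refine ⟨⟨hright, fun c hc hcov => ?_, fun c _ _ => ⟨F c, (hright c).mono Ioi_subset_Ici_self⟩⟩,
    sub_Lfun_eq_mul_sub_Lfun (hF ⊥).eq_mul_of_same hinc hG.2.1,
    fun c hGc => by simpa [ContinuousAt] using hlim le_rfl hGc.tendsto⟩
  obtain ⟨l, hl⟩ := hG.2.1 c hc hcov
  exact ⟨_, hlim nhdsWithin_le_nhds hl⟩
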